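/- arXiv:math/0301227 — 2 statements merged into one kernel-verified Lean document; each statement's English description precedes it below -/
import Mathlib

section
/- There is no good planar Zappatic surface whose associated graph is the graph on vertices v_1, v_2, v_3, v_4 with edges e_12, e_13, e_14, e_23, e_34 (no edge e_24) and two triangular faces on {1,2,3} and {1,3,4}. Combinatorially: if four distinct planes X_1, X_2, X_3, X_4 in P^r pairwise intersect in lines C_ij = X_i ∩ X_j for (i,j) ∈ {(1,2),(1,3),(1,4),(2,3),(3,4)}, with triple points P_123 = X_1∩X_2∩X_3 and P_134 = X_1∩X_3∩X_4 being points, then X_2 and X_4 must also meet along a line. -/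
/-- There is no good planar Zappatic surface whose associated graph has
vertices `v₁,…,v₄`, edges `e₁₂, e₁₃, e₁₄, e₂₃, e₃₄` (no edge `e₂₄`), and triangular faces
on `{1,2,3}` and `{1,3,4}`.  Combinatorially: if four distinct planes `X 0, …, X 3`
(rank-3 linear subspaces of `V`) intersect along lines (rank-2 intersections) for the pairs
`(0,1), (0,2), (0,3), (1,2), (2,3)`, and the triple intersections `X 0 ⊓ X 1 ⊓ X 2` and
`X 0 ⊓ X 2 ⊓ X 3` are points (rank 1), then `X 1` and `X 3` must also meet along a line,
i.e. their intersection has rank at least 2. -/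
theorem stmt5 (K : Type) [Field K] (V : Type) [AddCommGroup V] [Module K V]
    [FiniteDimensional K V]
    (X : Fin 4 → Submodule K V)
    (hplane : ∀ i, Module.finrank K (X i) = 3)
    (hdist : ∀ i j, i ≠ j → X i ≠ X j)
    (h01 : Module.finrank K ↥(X 0 ⊓ X 1) = 2)
    (h02 : Module.finrank K ↥(X 0 ⊓ X 2) = 2)
    (h03 : Module.finrank K ↥(X 0 ⊓ X 3) = 2)
    (h12 : Module.finrank K ↥(X 1 ⊓ X 2) = 2)
    (h23 : Module.finrank K ↥(X 2 ⊓ X 3) = 2)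
    (hP012 : Module.finrank K ↥(X 0 ⊓ X 1 ⊓ X 2) = 1)
    (hP023 : Module.finrank K ↥(X 0 ⊓ X 2 ⊓ X 3) = 1) :
    2 ≤ Module.finrank K ↥(X 1 ⊓ X 3) := by
  -- dim S = 4
  have hS4 : Module.finrank K ↥(X 0 ⊔ X 2) = 4 := by
    have := Submodule.finrank_sup_add_finrank_inf_eq (X 0) (X 2)
    rw [hplane 0, hplane 2, h02] at this
    omega
  -- X 1 ≤ S
  have hA : (X 0 ⊓ X 1) ⊓ (X 1 ⊓ X 2) = X 0 ⊓ X 1 ⊓ X 2 := by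
    rw [inf_assoc, ← inf_assoc (X 1) (X 1) (X 2), inf_idem, ← inf_assoc]
  have hX1 : X 1 ≤ X 0 ⊔ X 2 := by
    have hsum := Submodule.finrank_sup_add_finrank_inf_eq (X 0 ⊓ X 1) (X 1 ⊓ X 2)
    rw [hA, h01, h12, hP012] at hsum
    have hle : (X 0 ⊓ X 1) ⊔ (X 1 ⊓ X 2) ≤ X 1 :=
      sup_le inf_le_right inf_le_left
    have heq : (X 0 ⊓ X 1) ⊔ (X 1 ⊓ X 2) = X 1 := by
      apply Submodule.eq_of_le_of_finrank_le hle
      rw [hplane 1]; omega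
    rw [← heq]
    exact sup_le (le_trans inf_le_left le_sup_left)
      (le_trans inf_le_right le_sup_right)
  -- X 3 ≤ S
  have hA' : (X 0 ⊓ X 3) ⊓ (X 2 ⊓ X 3) = X 0 ⊓ X 2 ⊓ X 3 := by
    rw [inf_assoc, ← inf_assoc (X 3) (X 2) (X 3), inf_comm (X 3) (X 2),
      inf_assoc (X 2) (X 3) (X 3), inf_idem, ← inf_assoc]
  have hX3 : X 3 ≤ X 0 ⊔ X 2 := by
    have hsum := Submodule.finrank_sup_add_finrank_inf_eq (X 0 ⊓ X 3) (X 2 ⊓ X 3)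
    rw [hA', h03, h23, hP023] at hsum
    have hle : (X 0 ⊓ X 3) ⊔ (X 2 ⊓ X 3) ≤ X 3 :=
      sup_le inf_le_right inf_le_right
    have heq : (X 0 ⊓ X 3) ⊔ (X 2 ⊓ X 3) = X 3 := by
      apply Submodule.eq_of_le_of_finrank_le hle
      rw [hplane 3]; omega
    rw [← heq]
    exact sup_le (le_trans inf_le_left le_sup_left)
      (le_trans inf_le_left le_sup_right)
  -- conclude
  have hsup_le : X 1 ⊔ X 3 ≤ X 0 ⊔ X 2 := sup_le hX1 hX3
  have hmono : Module.finrank K ↥(X 1 ⊔ X 3) ≤ 4 :=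
    le_trans (Submodule.finrank_mono hsup_le) (le_of_eq hS4)
  have hsum := Submodule.finrank_sup_add_finrank_inf_eq (X 1) (X 3)
  rw [hplane 1, hplane 3] at hsum
  omega
end

section
/- On a smooth projective curve, given a finite collection of points P_1, ..., P_m and complex numbers a_1, ..., a_m with Σ a_k = 0, there exists a global meromorphic 1-form with at most simple poles, located among the P_k, whose residue at P_k equals a_k for all k. Conversely any meromorphic 1-form with at most simple poles has residues summing to zero. -/
open Polynomial RatFunc Finset Function

private lemma aux_reg {z : ℂ} {u : RatFunc ℂ} {P Q : Polynomial ℂ}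
    (h : u = algebraMap (Polynomial ℂ) (RatFunc ℂ) P / algebraMap (Polynomial ℂ) (RatFunc ℂ) Q)
    (hQ : Polynomial.eval z Q ≠ 0) :
    Polynomial.eval z u.denom ≠ 0 := by
  have hQ0 : Q ≠ 0 := fun h0 => hQ (by simp [h0])
  have hd : u.denom ∣ Q := (RatFunc.denom_dvd hQ0).mpr ⟨P, h⟩
  obtain ⟨c, hc⟩ := hd
  intro H
  exact hQ (by rw [hc, Polynomial.eval_mul, H, zero_mul])

private lemma aux_sub {z : ℂ} {u v : RatFunc ℂ}
    (hu : Polynomial.eval z u.denom ≠ 0) (hv : Polynomial.eval z v.denom ≠ 0) :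
    Polynomial.eval z (u - v).denom ≠ 0 := by
  refine aux_reg (P := u.num * v.denom - v.num * u.denom) (Q := u.denom * v.denom) ?_
    (by simp [Polynomial.eval_mul]; exact ⟨hu, hv⟩)
  conv_lhs => rw [← RatFunc.num_div_denom u, ← RatFunc.num_div_denom v]
  rw [div_sub_div _ _ (RatFunc.algebraMap_ne_zero (RatFunc.denom_ne_zero u))
    (RatFunc.algebraMap_ne_zero (RatFunc.denom_ne_zero v))]
  push_cast [map_mul, map_sub]
  ring_nf

private lemma aux_pf {m : ℕ} (p : Fin m → ℂ) (a : Fin m → ℂ) (s : Finset (Fin m)) :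
    ∑ k ∈ s, RatFunc.C (a k) / (RatFunc.X - RatFunc.C (p k)) =
      algebraMap (Polynomial ℂ) (RatFunc ℂ)
          (∑ k ∈ s, Polynomial.C (a k) * ∏ j ∈ s.erase k, (Polynomial.X - Polynomial.C (p j))) /
        algebraMap (Polynomial ℂ) (RatFunc ℂ) (∏ j ∈ s, (Polynomial.X - Polynomial.C (p j))) := by
  rw [map_sum, Finset.sum_div]
  refine Finset.sum_congr rfl fun k hk => ?_
  have hD : (∏ j ∈ s, (Polynomial.X - Polynomial.C (p j))) =
      (Polynomial.X - Polynomial.C (p k)) * ∏ j ∈ s.erase k, (Polynomial.X - Polynomial.C (p j)) :=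
    (Finset.mul_prod_erase s _ hk).symm
  have hP : algebraMap (Polynomial ℂ) (RatFunc ℂ)
      (∏ j ∈ s.erase k, (Polynomial.X - Polynomial.C (p j))) ≠ 0 :=
    RatFunc.algebraMap_ne_zero (Finset.prod_ne_zero_iff.mpr fun j _ => Polynomial.X_sub_C_ne_zero _)
  rw [hD, map_mul, map_mul, mul_comm (algebraMap (Polynomial ℂ) (RatFunc ℂ)
    (Polynomial.X - Polynomial.C (p k))) _, mul_comm (algebraMap (Polynomial ℂ) (RatFunc ℂ)
    (Polynomial.C (a k))) _, mul_div_mul_left _ _ hP]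
  rw [map_sub, RatFunc.algebraMap_X, RatFunc.algebraMap_C, RatFunc.algebraMap_C]

noncomputable def auxD {m : ℕ} (p : Fin m → ℂ) : Polynomial ℂ :=
  ∏ j, (Polynomial.X - Polynomial.C (p j))

noncomputable def auxN {m : ℕ} (p a : Fin m → ℂ) : Polynomial ℂ :=
  ∑ k, Polynomial.C (a k) * ∏ j ∈ Finset.univ.erase k, (Polynomial.X - Polynomial.C (p j))

private lemma aux_pf_univ {m : ℕ} (p a : Fin m → ℂ) :
    algebraMap (Polynomial ℂ) (RatFunc ℂ) (auxN p a) /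
      algebraMap (Polynomial ℂ) (RatFunc ℂ) (auxD p) =
      ∑ k, RatFunc.C (a k) / (RatFunc.X - RatFunc.C (p k)) :=
  (aux_pf p a Finset.univ).symm

private lemma auxD_ne_zero {m : ℕ} (p : Fin m → ℂ) : auxD p ≠ 0 :=
  Finset.prod_ne_zero_iff.mpr fun j _ => Polynomial.X_sub_C_ne_zero _

private lemma auxD_natDegree {m : ℕ} (p : Fin m → ℂ) : (auxD p).natDegree = m := by
  rw [auxD, Polynomial.natDegree_prod_of_monic _ _ fun j _ => Polynomial.monic_X_sub_C _]
  simp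

private lemma auxD_eval {m : ℕ} (p : Fin m → ℂ) {z : ℂ} (hz : z ∉ Set.range p) :
    Polynomial.eval z (auxD p) ≠ 0 := by
  rw [auxD, Polynomial.eval_prod]
  refine Finset.prod_ne_zero_iff.mpr fun j _ => ?_
  simp only [Polynomial.eval_sub, Polynomial.eval_X, Polynomial.eval_C, sub_ne_zero]
  exact fun h => hz ⟨j, h.symm⟩

private lemma aux_eval_erase {m : ℕ} {p : Fin m → ℂ} (hp : Function.Injective p) (k : Fin m) :
    Polynomial.eval (p k)
      (∏ j ∈ Finset.univ.erase k, (Polynomial.X - Polynomial.C (p j))) ≠ 0 := by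
  rw [Polynomial.eval_prod]
  refine Finset.prod_ne_zero_iff.mpr fun j hj => ?_
  simp only [Polynomial.eval_sub, Polynomial.eval_X, Polynomial.eval_C, sub_ne_zero]
  exact fun h => (Finset.mem_erase.mp hj).1 (hp h).symm

private lemma auxN_natDegree_le {m : ℕ} (p a : Fin m → ℂ) : (auxN p a).natDegree ≤ m - 1 := by
  refine Polynomial.natDegree_sum_le_of_forall_le _ _ fun k _ => ?_
  refine (Polynomial.natDegree_C_mul_le _ _).trans ?_
  rw [Polynomial.natDegree_prod_of_monic _ _ fun j _ => Polynomial.monic_X_sub_C _]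
  simp [Finset.card_erase_of_mem]

private lemma auxN_coeff {m : ℕ} (p a : Fin m → ℂ) :
    (auxN p a).coeff (m - 1) = ∑ k, a k := by
  rw [auxN, Polynomial.finset_sum_coeff]
  refine Finset.sum_congr rfl fun k _ => ?_
  rw [Polynomial.coeff_C_mul]
  have hmon : (∏ j ∈ Finset.univ.erase k, (Polynomial.X - Polynomial.C (p j))).Monic :=
    Polynomial.monic_prod_of_monic _ _ fun j _ => Polynomial.monic_X_sub_C _
  have hdeg : (∏ j ∈ Finset.univ.erase k, (Polynomial.X - Polynomial.C (p j))).natDegree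
      = m - 1 := by
    rw [Polynomial.natDegree_prod_of_monic _ _ fun j _ => Polynomial.monic_X_sub_C _]
    simp [Finset.card_erase_of_mem]
  rw [← hdeg, hmon.coeff_natDegree, mul_one]

private lemma aux_cross {f : RatFunc ℂ} {P Q : Polynomial ℂ} (hQ : Q ≠ 0)
    (h : f = algebraMap (Polynomial ℂ) (RatFunc ℂ) P / algebraMap (Polynomial ℂ) (RatFunc ℂ) Q) :
    f.num * Q = P * f.denom :=
  (RatFunc.num_mul_eq_mul_denom_iff hQ).mpr h

private lemma aux_deg {f : RatFunc ℂ} {P Q : Polynomial ℂ} (hQ : Q ≠ 0)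
    (h : f = algebraMap (Polynomial ℂ) (RatFunc ℂ) P / algebraMap (Polynomial ℂ) (RatFunc ℂ) Q)
    (hf : f ≠ 0) :
    f.num.natDegree + Q.natDegree = P.natDegree + f.denom.natDegree := by
  have hc := aux_cross hQ h
  have hP : P ≠ 0 := by
    rintro rfl
    rw [map_zero, zero_div] at h
    exact hf h
  have h2 := congrArg Polynomial.natDegree hc
  rwa [Polynomial.natDegree_mul (RatFunc.num_ne_zero hf) hQ,
    Polynomial.natDegree_mul hP (RatFunc.denom_ne_zero f)] at h2

private lemma aux_deg_iff (f : RatFunc ℂ) (hf : f ≠ 0) :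
    (f.num.degree + 2 ≤ f.denom.degree ↔ f.num.natDegree + 2 ≤ f.denom.natDegree) := by
  rw [Polynomial.degree_eq_natDegree (RatFunc.num_ne_zero hf),
    Polynomial.degree_eq_natDegree (RatFunc.denom_ne_zero f)]
  constructor
  · intro h; exact_mod_cast h
  · intro h; exact_mod_cast h

/-- Residue theorem and its converse on the projective line: on `P¹_ℂ`, a
meromorphic 1-form is `ω = f dz` with `f ∈ ℂ(z)` a rational function.  Given distinct
points `p 0, …, p (m-1) ∈ ℂ ⊂ P¹` and complex numbers `a 0, …, a (m-1)`, we have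
`Σ a k = 0` if and only if there exists a rational function `f` such that:
* for each `k`, `f` has at most a simple pole at `p k` with residue `a k`
  (i.e. `f - a k / (z - p k)` is regular at `p k`);
* `f` has no other poles in `ℂ`;
* the form `f dz` is regular at infinity (`deg num f + 2 ≤ deg denom f`). -/
theorem stmt16 (m : ℕ) (p : Fin m → ℂ) (hp : Function.Injective p) (a : Fin m → ℂ) :
    (∑ k, a k = 0) ↔
      ∃ f : RatFunc ℂ,
        (∀ k, ∃ g : RatFunc ℂ, Polynomial.eval (p k) g.denom ≠ 0 ∧
          f = RatFunc.C (a k) / (RatFunc.X - RatFunc.C (p k)) + g) ∧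
        (∀ z : ℂ, z ∉ Set.range p → Polynomial.eval z f.denom ≠ 0) ∧
        f.num.degree + 2 ≤ f.denom.degree := by
  constructor
  · intro hsum
    refine ⟨algebraMap (Polynomial ℂ) (RatFunc ℂ) (auxN p a) /
        algebraMap (Polynomial ℂ) (RatFunc ℂ) (auxD p), fun k => ?_, fun z hz => ?_, ?_⟩
    · refine ⟨∑ j ∈ Finset.univ.erase k, RatFunc.C (a j) / (RatFunc.X - RatFunc.C (p j)),
        aux_reg (aux_pf p a (Finset.univ.erase k)) (aux_eval_erase hp k), ?_⟩
      rw [aux_pf_univ p a]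
      exact (Finset.add_sum_erase _ _ (Finset.mem_univ k)).symm
    · exact aux_reg rfl (auxD_eval p hz)
    · by_cases hf0 : algebraMap (Polynomial ℂ) (RatFunc ℂ) (auxN p a) /
          algebraMap (Polynomial ℂ) (RatFunc ℂ) (auxD p) = 0
      · rw [hf0]
        simp
      · have hN0 : auxN p a ≠ 0 := fun h => hf0 (by rw [h, map_zero, zero_div])
        have hm : 1 ≤ m := by
          rcases Nat.eq_zero_or_pos m with h | h
          · exfalso; apply hN0; subst h; simp [auxN]
          · exact h
        have hled : (auxN p a).natDegree + 2 ≤ m := by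
          rcases lt_or_eq_of_le (auxN_natDegree_le p a) with h | h
          · omega
          · exfalso
            apply hN0
            apply Polynomial.leadingCoeff_eq_zero.mp
            rw [Polynomial.leadingCoeff, h, auxN_coeff p a, hsum]
        have hkey := aux_deg (auxD_ne_zero p) rfl hf0
        rw [auxD_natDegree] at hkey
        rw [aux_deg_iff _ hf0]
        omega
  · rintro ⟨f, h1, h2, h3⟩
    by_cases hm0 : m = 0
    · subst hm0; simp
    have hm : 1 ≤ m := Nat.one_le_iff_ne_zero.mpr hm0
    set T := algebraMap (Polynomial ℂ) (RatFunc ℂ) (auxN p a) /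
        algebraMap (Polynomial ℂ) (RatFunc ℂ) (auxD p) with hT
    have hreg : ∀ z : ℂ, Polynomial.eval z (f - T).denom ≠ 0 := by
      intro z
      by_cases hz : z ∈ Set.range p
      · obtain ⟨k, rfl⟩ := hz
        obtain ⟨g, hg, hfg⟩ := h1 k
        have hTk : T = RatFunc.C (a k) / (RatFunc.X - RatFunc.C (p k)) +
            ∑ j ∈ Finset.univ.erase k, RatFunc.C (a j) / (RatFunc.X - RatFunc.C (p j)) := by
          rw [hT, aux_pf_univ p a]
          exact (Finset.add_sum_erase _ _ (Finset.mem_univ k)).symm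
        have heq : f - T = g -
            ∑ j ∈ Finset.univ.erase k, RatFunc.C (a j) / (RatFunc.X - RatFunc.C (p j)) := by
          rw [hfg, hTk]; ring
        rw [heq]
        exact aux_sub hg (aux_reg (aux_pf p a (Finset.univ.erase k)) (aux_eval_erase hp k))
      · exact aux_sub (h2 z hz) (aux_reg hT (auxD_eval p hz))
    have hdeg0 : (f - T).denom.degree ≤ 0 := by
      by_contra hgt
      obtain ⟨z, hz⟩ := Complex.exists_root (lt_of_not_ge hgt)
      exact hreg z hz
    set c : ℂ := (f - T).denom.coeff 0 with hcdef
    have hc : (f - T).denom = Polynomial.C c := Polynomial.degree_le_zero_iff.mp hdeg0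
    have hc0 : c ≠ 0 := by
      intro h
      apply RatFunc.denom_ne_zero (f - T)
      rw [hc, h, Polynomial.C_0]
    have hq : f - T = algebraMap (Polynomial ℂ) (RatFunc ℂ)
        (Polynomial.C c⁻¹ * (f - T).num) := by
      conv_lhs => rw [← RatFunc.num_div_denom (f - T)]
      rw [hc, eq_comm, eq_div_iff (RatFunc.algebraMap_ne_zero
        (fun h => hc0 (Polynomial.C_eq_zero.mp h)))]
      rw [← map_mul]
      congr 1
      rw [mul_comm, ← mul_assoc, ← Polynomial.C_mul, mul_inv_cancel₀ hc0, Polynomial.C_1, one_mul]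
    set q : Polynomial ℂ := Polynomial.C c⁻¹ * (f - T).num with hqdef
    have hfq : f = algebraMap (Polynomial ℂ) (RatFunc ℂ) (auxN p a + q * auxD p) /
        algebraMap (Polynomial ℂ) (RatFunc ℂ) (auxD p) := by
      have hDne' : algebraMap (Polynomial ℂ) (RatFunc ℂ) (auxD p) ≠ 0 :=
        RatFunc.algebraMap_ne_zero (auxD_ne_zero p)
      have hf' : f = algebraMap (Polynomial ℂ) (RatFunc ℂ) q + T := by rw [← hq]; ring
      rw [hf', hT]
      conv_rhs => rw [map_add, map_mul, add_div, mul_div_assoc, div_self hDne', mul_one]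
      exact add_comm _ _
    have hcross := aux_cross (auxD_ne_zero p) hfq
    have hq0 : q = 0 := by
      by_contra hq0
      have hqD : q * auxD p ≠ 0 := mul_ne_zero hq0 (auxD_ne_zero p)
      have hndlt : (auxN p a).natDegree < (q * auxD p).natDegree := by
        rw [Polynomial.natDegree_mul hq0 (auxD_ne_zero p), auxD_natDegree]
        have := auxN_natDegree_le p a
        omega
      have hsum_nd : (auxN p a + q * auxD p).natDegree = (q * auxD p).natDegree :=
        Polynomial.natDegree_add_eq_right_of_natDegree_lt hndlt
      have hsum_ne : auxN p a + q * auxD p ≠ 0 := by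
        intro h0
        have h1' : q * auxD p = -auxN p a := by linear_combination h0
        rw [h1', Polynomial.natDegree_neg] at hndlt
        omega
      have hfne : f ≠ 0 := by
        rw [hfq]
        exact div_ne_zero (RatFunc.algebraMap_ne_zero hsum_ne)
          (RatFunc.algebraMap_ne_zero (auxD_ne_zero p))
      have hkey := aux_deg (auxD_ne_zero p) hfq hfne
      rw [auxD_natDegree, hsum_nd, Polynomial.natDegree_mul hq0 (auxD_ne_zero p),
        auxD_natDegree] at hkey
      have h3' := (aux_deg_iff f hfne).mp h3
      omega
    rw [hq0, zero_mul, add_zero] at hfq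
    rw [← auxN_coeff p a]
    by_cases hN0 : auxN p a = 0
    · rw [hN0]; simp
    · have hfne : f ≠ 0 := by
        rw [hfq]
        exact div_ne_zero (RatFunc.algebraMap_ne_zero hN0)
          (RatFunc.algebraMap_ne_zero (auxD_ne_zero p))
      have hkey := aux_deg (auxD_ne_zero p) hfq hfne
      rw [auxD_natDegree] at hkey
      have h3' := (aux_deg_iff f hfne).mp h3
      exact Polynomial.coeff_eq_zero_of_natDegree_lt (by omega)
end
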